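/- Let G be a game with oracle distribution μ, let K ∈ ℤ+ and T ∈ ℕ. Fix u ∈ ℕ, distinct salts k_1,…,k_u ∈ [K], possible challenges ch_1,…,ch_u of G, and fixed oracle functions f_j for every j ∈ [K] ∖ {k_1,…,k_u}. Sample f_{k_i} ∼ μ_{ch_i} independently for i ∈ [u]. Let B be a deterministic T-query oracle algorithm taking a (salt, challenge) pair as input and having joint oracle access to (f_1,…,f_K), and run B sequentially (with no shared memory between executions) on inputs (k_1, ch_1), …, (k_u, ch_u). Then Pr[ for every i ∈ [u], the output of B on input (k_i, ch_i) lies in R_{f_{k_i}, ch_i} ] ≤ ∏_{i=1}^u ε_{G_{ch_i}}(T). -/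

import Mathlib

open scoped ENNReal BigOperators

noncomputable section

/-- `{0,1}`-valued indicator of a proposition, in `ℝ≥0∞`. -/
def ind (p : Prop) : ℝ≥0∞ :=
  haveI := Classical.propDecidable p
  if p then 1 else 0

/-- Deterministic oracle algorithms making at most `T` queries, modeled as decision
trees of depth at most `T`: a query is an element `q : Q`, the oracle's answer to `q`
has type `Ans q`, and the final output has type `O`. -/
inductive DT (Q : Type) (Ans : Q → Type) (O : Type) : ℕ → Type
  | ret {T : ℕ} (o : O) : DT Q Ans O T
  | query {T : ℕ} (q : Q) (cont : Ans q → DT Q Ans O T) : DT Q Ans O (T + 1)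

/-- Run a decision tree against an oracle. -/
def DT.run {Q : Type} {Ans : Q → Type} {O : Type} :
    {T : ℕ} → DT Q Ans O T → ((q : Q) → Ans q) → O
  | _, DT.ret o, _ => o
  | _, DT.query q cont, f => DT.run (cont (f q)) f

/-- The number of queries satisfying `p` made along the execution path on oracle `f`. -/
def DT.countP {Q : Type} {Ans : Q → Type} {O : Type} (p : Q → Prop) :
    {T : ℕ} → DT Q Ans O T → ((q : Q) → Ans q) → ℕ
  | _, DT.ret _, _ => 0
  | _, DT.query q cont, f =>
      (haveI := Classical.propDecidable (p q); if p q then 1 else 0)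
        + DT.countP p (cont (f q)) f

/-- A (single-challenge) game: an oracle distribution `μ` over functions
`Fin M → Fin N`, a challenge distribution `π f` for each oracle `f`, and an
accepting outcome set `R f ch` for each oracle and challenge. -/
structure Game where
  M : ℕ
  N : ℕ
  hM : 0 < M
  hN : 0 < N
  Ch : Type
  chFin : Fintype Ch
  Out : Type
  μ : PMF (Fin M → Fin N)
  π : (Fin M → Fin N) → PMF Ch
  R : (Fin M → Fin N) → Ch → Set Out

attribute [instance] Game.chFin

namespace Game

variable (G : Game)

/-- Winning probability of a deterministic `T`-query algorithm (taking the challenge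
as classical input) for the game `G`. -/
def detWinProb {T : ℕ} (a : G.Ch → DT (Fin G.M) (fun _ => Fin G.N) G.Out T) : ℝ≥0∞ :=
  ∑' f : Fin G.M → Fin G.N, G.μ f * ∑' ch : G.Ch, G.π f ch * ind ((a ch).run f ∈ G.R f ch)

/-- Uniform security `ε_G(T)`: the supremum, over randomized `T`-query algorithms
(probability distributions over deterministic ones), of the winning probability. -/
def unifSec (T : ℕ) : ℝ≥0∞ :=
  ⨆ A : PMF (G.Ch → DT (Fin G.M) (fun _ => Fin G.N) G.Out T),
    ∑' a, A a * G.detWinProb a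

/-- Winning probability, in the salted game `G_K`, of a non-uniform algorithm:
a randomized `T`-query algorithm `A` receiving `S` bits of advice together with the
salt and challenge, and an advice function `adv` mapping the joint oracle to `S` bits.
The joint oracle consists of `K` i.i.d. copies `g 0, …, g (K-1)` of the oracle of `G`,
the salt `k` is uniform on `Fin K` and the challenge is drawn from `π (g k)`. -/
def saltedWinProb (K S T : ℕ)
    (A : PMF ((Fin S → Bool) × Fin K × G.Ch →
      DT (Fin K × Fin G.M) (fun _ => Fin G.N) G.Out T))
    (adv : (Fin K → Fin G.M → Fin G.N) → Fin S → Bool) : ℝ≥0∞ :=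
  ∑' g : Fin K → Fin G.M → Fin G.N,
    (∏ k, G.μ (g k)) *
      ((K : ℝ≥0∞)⁻¹ *
        ∑' k : Fin K, ∑' ch : G.Ch, G.π (g k) ch *
          ∑' a, A a *
            ind ((a (adv g, k, ch)).run (fun q => g q.1 q.2) ∈ G.R (g k) ch))

/-- Non-uniform security `ε_{G_K}(S,T)` of the salted game `G_K`: the supremum of the
winning probability over all non-uniform `(S,T)`-algorithms `(A, adv)`. -/
def saltedNonunifSec (K S T : ℕ) : ℝ≥0∞ :=
  ⨆ (A : PMF ((Fin S → Bool) × Fin K × G.Ch →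
      DT (Fin K × Fin G.M) (fun _ => Fin G.N) G.Out T))
    (adv : (Fin K → Fin G.M → Fin G.N) → Fin S → Bool),
    G.saltedWinProb K S T A adv

/-- The marginal probability of a challenge `ch` (for `f ∼ μ`, `ch ∼ π f`). -/
def chProb (ch : G.Ch) : ℝ≥0∞ := ∑' f : Fin G.M → Fin G.N, G.μ f * G.π f ch

/-- The oracle distribution `μ_ch` conditioned on the drawn challenge being `ch`. -/
def condDist (ch : G.Ch) (f : Fin G.M → Fin G.N) : ℝ≥0∞ :=
  G.μ f * G.π f ch / G.chProb ch

/-- Uniform security `ε_{G_ch}(T)` of the challenge-conditioned plain game `G_ch`: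
the supremum over randomized `T`-query algorithms of the probability, for
`f ∼ μ_ch`, that the output lies in `R f ch`. -/
def condSec (ch : G.Ch) (T : ℕ) : ℝ≥0∞ :=
  ⨆ A : PMF (DT (Fin G.M) (fun _ => Fin G.N) G.Out T),
    ∑' a, A a * ∑' f : Fin G.M → Fin G.N, G.condDist ch f * ind (a.run f ∈ G.R f ch)

/-- Uniform security `ε_{G^n}(T')` of the multi-challenge game `G^n`: `n` i.i.d.
challenges are drawn from `π f` and the algorithm must answer all of them. -/
def multiSec (n T' : ℕ) : ℝ≥0∞ :=
  ⨆ A : PMF ((Fin n → G.Ch) → DT (Fin G.M) (fun _ => Fin G.N) (Fin n → G.Out) T'),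
    ∑' a, A a * ∑' f : Fin G.M → Fin G.N, G.μ f *
      ∑' chs : Fin n → G.Ch,
        (∏ j, G.π f (chs j)) * ind (∀ j, (a chs).run f j ∈ G.R f (chs j))

end Game

/-- A plain game: a game without challenges. -/
structure PlainGame where
  M : ℕ
  N : ℕ
  hM : 0 < M
  hN : 0 < N
  Out : Type
  μ : PMF (Fin M → Fin N)
  R : (Fin M → Fin N) → Set Out

namespace PlainGame

/-- Uniform security `ε_G(T)` of a plain game. -/
def unifSec (G : PlainGame) (T : ℕ) : ℝ≥0∞ :=
  ⨆ A : PMF (DT (Fin G.M) (fun _ => Fin G.N) G.Out T),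
    ∑' a, A a * ∑' f : Fin G.M → Fin G.N, G.μ f * ind (a.run f ∈ G.R f)

end PlainGame

/-- Query domain for joint oracle access to the oracles of `k` plain games:
each query is addressed to one of the oracles. -/
abbrev ProdQ {k : ℕ} (Gs : Fin k → PlainGame) : Type := (i : Fin k) × Fin (Gs i).M

/-- Answer type for queries in the direct product. -/
abbrev ProdAns {k : ℕ} (Gs : Fin k → PlainGame) : ProdQ Gs → Type :=
  fun q => Fin (Gs q.1).N

/-- The joint oracle `(f 0, …, f (k-1))` as a single oracle function. -/
def jointOracle {k : ℕ} {Gs : Fin k → PlainGame}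
    (f : (i : Fin k) → Fin (Gs i).M → Fin (Gs i).N) : (q : ProdQ Gs) → ProdAns Gs q :=
  fun q => f q.1 q.2

/-- Winning probability of a `(T 0, …, T (k-1))`-memoryless algorithm, given by
deterministic algorithms `A i` (each making at most `T i` queries and each with
joint oracle access) run sequentially with no shared memory; the oracles are drawn
independently, and the algorithm wins if every output `(A i).run` is accepted. -/
def memorylessWinProb {k : ℕ} (Gs : Fin k → PlainGame) {T : Fin k → ℕ}
    (A : (i : Fin k) → DT (ProdQ Gs) (ProdAns Gs) (Gs i).Out (T i)) : ℝ≥0∞ :=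
  ∑' f : (i : Fin k) → Fin (Gs i).M → Fin (Gs i).N,
    (∏ i, (Gs i).μ (f i)) * ind (∀ i, (A i).run (jointOracle f) ∈ (Gs i).R (f i))

/-- Winning probability of a deterministic algorithm with joint oracle access
outputting a tuple `(e 0, …, e (k-1))` for the direct product game. -/
def jointWinProb {k : ℕ} (Gs : Fin k → PlainGame) {B : ℕ}
    (A : DT (ProdQ Gs) (ProdAns Gs) ((i : Fin k) → (Gs i).Out) B) : ℝ≥0∞ :=
  ∑' f : (i : Fin k) → Fin (Gs i).M → Fin (Gs i).N,
    (∏ i, (Gs i).μ (f i)) * ind (∀ i, A.run (jointOracle f) i ∈ (Gs i).R (f i))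

/-- A deterministic algorithm is `(T 0, …, T (k-1))`-fair if in every execution it
makes at most `T i` queries to the `i`-th oracle. -/
def IsFair {k : ℕ} {Gs : Fin k → PlainGame} {O : Type} {B : ℕ} (T : Fin k → ℕ)
    (A : DT (ProdQ Gs) (ProdAns Gs) O B) : Prop :=
  ∀ (f : (i : Fin k) → Fin (Gs i).M → Fin (Gs i).N) (i : Fin k),
    A.countP (fun q => q.1 = i) (jointOracle f) ≤ T i

end

/-
Allow arbitrary unnormalised weights `w k` on the oracles and induct on the number of weights
that are not point masses plus the total query budget. If a halted tree with output `o` sits on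
an oracle whose weight is not a point mass, move the event `o ∈ R k` into that weight and split
it into point masses; the pieces add up to the halted tree's own payoff. Otherwise look at the
first queries: some tree queries an oracle carrying a point mass, or the map sending a tree to
the oracle it queries has a cycle. Answering these first queries simultaneously conditions each
queried oracle on one coordinate; summed over the answer, the best payoffs of the conditioned
weights cost one query of that oracle's own budget, and a point mass answers for free. Once all
trees have halted the payoff factorises.
-/

noncomputable section

open Finset Function

lemma ind_of_pos {p : Prop} (h : p) : ind p = 1 := by simp [ind, h]

lemma ind_of_neg {p : Prop} (h : ¬p) : ind p = 0 := by simp [ind, h]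

lemma ind_le_one (p : Prop) : ind p ≤ 1 := by
  by_cases h : p
  · rw [ind_of_pos h]
  · rw [ind_of_neg h]; exact zero_le_one

lemma ind_forall {κ : Type*} [Fintype κ] (p : κ → Prop) :
    ind (∀ k, p k) = ∏ k, ind (p k) := by
  by_cases h : ∀ k, p k
  · rw [ind_of_pos h, prod_eq_one fun k _ => ind_of_pos (h k)]
  · obtain ⟨k, hk⟩ := not_forall.mp h
    rw [ind_of_neg h, prod_eq_zero (mem_univ k) (ind_of_neg hk)]

lemma ENNReal.sum_iSup_eq_iSup_pi {κ S : Type*} [Fintype κ] (F : κ → S → ℝ≥0∞) :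
    ∑ k, ⨆ s, F k s = ⨆ g : κ → S, ∑ k, F k (g k) := by
  have hpi (k : κ) : ⨆ s, F k s = ⨆ g : κ → S, F k (g k) :=
    (Surjective.iSup_comp (fun s => ⟨fun _ => s, rfl⟩ : Surjective fun g : κ → S => g k)
      (F k)).symm
  rw [sum_congr rfl fun k _ => hpi k]
  refine ENNReal.finsetSum_iSup fun g g' => ?_
  refine ⟨fun k => if F k (g k) ≤ F k (g' k) then g' k else g k, fun k => ?_⟩
  dsimp only
  split_ifs with h
  · exact ⟨h, le_rfl⟩
  · exact ⟨le_rfl, (not_le.mp h).le⟩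

lemma Finset.prod_apply_update {κ M : Type*} {γ : κ → Type*} [Fintype κ] [DecidableEq κ]
    [CommMonoid M] (F : ∀ k, γ k → M) (g : ∀ k, γ k) (k₀ : κ) (v : γ k₀) :
    ∏ k, F k (update g k₀ v k) = F k₀ v * ∏ k ∈ univ.erase k₀, F k (g k) := by
  rw [← mul_prod_erase univ _ (mem_univ k₀), update_self]
  congr 1
  exact prod_congr rfl fun k hk => by rw [update_of_ne (ne_of_mem_erase hk)]

lemma Function.exists_iterate_mem_periodicPts {κ : Type*} [Finite κ] (σ : κ → κ) (a : κ) :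
    ∃ n, σ^[n] a ∈ periodicPts σ := by
  obtain ⟨i, j, hij, heq⟩ := Finite.exists_ne_map_eq_of_infinite fun n : ℕ => σ^[n] a
  wlog h : i < j generalizing i j
  · exact this j i hij.symm heq.symm (lt_of_le_of_ne (not_lt.mp h) hij.symm)
  refine ⟨i, mk_mem_periodicPts (Nat.sub_pos_of_lt h) ?_⟩
  change σ^[j - i] (σ^[i] a) = σ^[i] a
  rw [← iterate_add_apply, Nat.sub_add_cancel h.le]
  exact heq.symm

lemma Finset.exists_exit_or_cycle {κ : Type*} [Finite κ] (σ : κ → κ)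
    {A : Finset κ} (hA : A.Nonempty) :
    (∃ k ∈ A, σ k ∉ A) ∨ ∃ C ⊆ A, C.Nonempty ∧ (∀ c ∈ C, σ c ∈ C) ∧ Set.InjOn σ C := by
  classical
  by_cases hexit : ∃ k ∈ A, σ k ∉ A
  · exact .inl hexit
  push Not at hexit
  refine .inr ⟨A.filter (· ∈ periodicPts σ), filter_subset _ _, ?_, fun c hc => ?_, ?_⟩
  · obtain ⟨a, ha⟩ := hA
    obtain ⟨n, hn⟩ := exists_iterate_mem_periodicPts σ a
    have hmaps : Set.MapsTo σ A A := fun k hk => hexit k hk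
    exact ⟨σ^[n] a, mem_filter.mpr ⟨hmaps.iterate n ha, hn⟩⟩
  · rw [mem_filter] at hc ⊢
    exact ⟨hexit c hc.1, (bijOn_periodicPts σ).mapsTo hc.2⟩
  · exact (bijOn_periodicPts σ).injOn.mono fun c hc => (mem_filter.mp hc).2

lemma Set.Subsingleton.exists_forall_eq {X Y : Type*} [Nonempty Y] {s : Set X}
    (hs : s.Subsingleton) (f : X → Y) : ∃ c, ∀ x ∈ s, f x = c := by
  rcases hs.eq_empty_or_singleton with rfl | ⟨x₀, rfl⟩
  · exact ⟨Classical.arbitrary Y, by simp⟩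
  · exact ⟨f x₀, by simp⟩

namespace DT

variable {Q Q' O : Type}

def root {Ans : Q → Type} : {T : ℕ} → DT Q Ans O T → Option Q
  | _, ret _ => none
  | _, query q _ => some q

lemma exists_eq_ret_of_root_eq_none {Ans : Q → Type} {T : ℕ} {s : DT Q Ans O T}
    (h : s.root = none) : ∃ o, s = ret o := by
  cases s with
  | ret o => exact ⟨o, rfl⟩
  | query q c => cases h

lemma pos_of_root_eq_some {Ans : Q → Type} {T : ℕ} {s : DT Q Ans O T} {q : Q}
    (h : s.root = some q) : 0 < T := by
  cases s with
  | ret o => cases h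
  | query q c => exact Nat.succ_pos _

def lift {Ans : Q → Type} : {T : ℕ} → DT Q Ans O T → DT Q Ans O (T + 1)
  | _, ret o => ret o
  | _, query q c => query q fun a => (c a).lift

@[simp]
lemma run_lift {Ans : Q → Type} : ∀ {T : ℕ} (s : DT Q Ans O T) (f : (q : Q) → Ans q),
    s.lift.run f = s.run f
  | _, ret _, _ => rfl
  | _, query q c, f => run_lift (c (f q)) f

variable {β : Type}

def reroute (ρ : Q → Q' ⊕ β) : {T : ℕ} → DT Q (fun _ => β) O T → DT Q' (fun _ => β) O T
  | _, ret o => ret o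
  | _, query q c =>
    match ρ q with
    | .inl q' => query q' fun b => (c b).reroute ρ
    | .inr b => ((c b).reroute ρ).lift

lemma run_reroute (ρ : Q → Q' ⊕ β) : ∀ {T : ℕ} (s : DT Q (fun _ => β) O T) (f : Q' → β),
    (s.reroute ρ).run f = s.run fun q => Sum.elim f id (ρ q)
  | _, ret _, _ => rfl
  | _, query q c, f => by
    rcases h : ρ q with q' | b
    · simp only [reroute, h, run, Sum.elim_inl]
      exact run_reroute ρ _ f
    · simp only [reroute, h, run_lift, run, Sum.elim_inr, id]
      exact run_reroute ρ _ f

end DT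

abbrev BudgetedDT (Q β O : Type) : Type := Σ T, DT Q (fun _ => β) O T

namespace BudgetedDT

variable {Q β O : Type}

def stepBy (ans : Q → β) : BudgetedDT Q β O → BudgetedDT Q β O
  | ⟨T, .ret o⟩ => ⟨T, .ret o⟩
  | ⟨_, .query q c⟩ => ⟨_, c (ans q)⟩

lemma stepBy_fst_add_one {ans : Q → β} {t : BudgetedDT Q β O} {q : Q}
    (h : t.2.root = some q) : (t.stepBy ans).1 + 1 = t.1 := by
  obtain ⟨T, s⟩ := t
  cases s with
  | ret o => cases h
  | query q c => rfl

lemma run_stepBy {ans : Q → β} {t : BudgetedDT Q β O} {q : Q} (h : t.2.root = some q)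
    {f : Q → β} (hf : ans q = f q) : (t.stepBy ans).2.run f = t.2.run f := by
  obtain ⟨T, s⟩ := t
  cases s with
  | ret o => cases h
  | query q' c =>
    cases h
    simp only [stepBy, DT.run, hf]

end BudgetedDT

section OptPayoff

variable {α β O : Type} [Fintype α] [DecidableEq α] [Fintype β]
  (w : (α → β) → ℝ≥0∞) (R : (α → β) → Set O)

def payoff {T : ℕ} (s : DT α (fun _ => β) O T) : ℝ≥0∞ := ∑ x, w x * ind (s.run x ∈ R x)

def optPayoff (T : ℕ) : ℝ≥0∞ := ⨆ s : DT α (fun _ => β) O T, payoff w R s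

variable {w R}

lemma payoff_le_optPayoff {T : ℕ} (s : DT α (fun _ => β) O T) :
    payoff w R s ≤ optPayoff w R T :=
  le_iSup (fun s : DT α (fun _ => β) O T => payoff w R s) s

variable (w R)

lemma optPayoff_le_sum (T : ℕ) : optPayoff w R T ≤ ∑ x, w x :=
  iSup_le fun _ => sum_le_sum fun _ _ => mul_le_of_le_one_right' (ind_le_one _)

lemma optPayoff_mono : Monotone (optPayoff w R) :=
  monotone_nat_of_le_succ fun T => iSup_le fun s => by
    simpa only [payoff, DT.run_lift] using payoff_le_optPayoff (w := w) (R := R) s.lift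

lemma optPayoff_zero (T : ℕ) : optPayoff (0 : (α → β) → ℝ≥0∞) R T = 0 :=
  nonpos_iff_eq_zero.mp <| (optPayoff_le_sum 0 R T).trans_eq (by simp)

lemma sum_optPayoff_indicator_eval_le (p : α) (T : ℕ) :
    ∑ b, optPayoff (((fun x : α → β => x p) ⁻¹' {b}).indicator w) R T ≤
      optPayoff w R (T + 1) := by
  unfold optPayoff
  rw [ENNReal.sum_iSup_eq_iSup_pi]
  refine iSup_le fun g => le_of_eq_of_le ?_ (payoff_le_optPayoff (.query p g))
  simp only [payoff, DT.run]
  rw [sum_comm]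
  refine sum_congr rfl fun x _ => ?_
  rw [sum_eq_single (x p) (fun b _ hb => by
      rw [Set.indicator_of_notMem (show x ∉ (fun x : α → β => x p) ⁻¹' {b} from hb.symm),
        zero_mul]) (absurd (mem_univ _)),
    Set.indicator_of_mem (show x ∈ (fun x : α → β => x p) ⁻¹' {x p} from rfl)]

variable {w R} in
lemma sum_optPayoff_indicator_of_eqOn_support {γ : Type} [Fintype γ]
    {π : (α → β) → γ} {c : γ} (hπ : ∀ x ∈ support w, π x = c) (T : ℕ) :
    ∑ b, optPayoff ((π ⁻¹' {b}).indicator w) R T = optPayoff w R T := by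
  classical
  have hind (b : γ) : (π ⁻¹' {b}).indicator w = if b = c then w else 0 := by
    ext x
    by_cases hx : w x = 0
    · split_ifs <;> simp [hx]
    · have := hπ x hx
      split_ifs with hb <;> simp [this, hb, Ne.symm]
  simp only [hind, apply_ite (optPayoff · R T), optPayoff_zero, sum_ite_eq', mem_univ, if_true]

end OptPayoff

section NondegCount

variable {ι α β : Type} [Finite ι] {w w' : ι → (α → β) → ℝ≥0∞}

def nondegCount (w : ι → (α → β) → ℝ≥0∞) : ℕ := {k | ¬(support (w k)).Subsingleton}.ncard

lemma nondegCount_le_of_support_subset (h : ∀ k, support (w' k) ⊆ support (w k)) :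
    nondegCount w' ≤ nondegCount w :=
  Set.ncard_le_ncard (fun _ hk hs => hk (hs.anti (h _))) (Set.toFinite _)

lemma nondegCount_update_lt [DecidableEq ι] {k₀ : ι} (hk₀ : ¬(support (w k₀)).Subsingleton)
    {v : (α → β) → ℝ≥0∞} (hv : (support v).Subsingleton) :
    nondegCount (update w k₀ v) < nondegCount w := by
  refine Set.ncard_lt_ncard ((Set.ssubset_iff_of_subset fun k hk => ?_).mpr ⟨k₀, hk₀, ?_⟩)
    (Set.toFinite _)
  · have hne : k ≠ k₀ := by rintro rfl; exact hk (by rwa [update_self])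
    simpa only [Set.mem_ofPred_eq, update_of_ne hne] using hk
  · simpa only [Set.mem_ofPred_eq, update_self, not_not] using hv

end NondegCount

section Memoryless

variable {ι α β O : Type} [Fintype ι] [DecidableEq ι] [Fintype α] [DecidableEq α] [Fintype β]

def memorylessPayoff (w : ι → (α → β) → ℝ≥0∞) (R : ι → (α → β) → Set O)
    (t : ι → BudgetedDT (ι × α) β O) : ℝ≥0∞ :=
  ∑ H : ι → α → β, (∏ k, w k (H k)) * ind (∀ k, (t k).2.run (uncurry H) ∈ R k (H k))

variable {w : ι → (α → β) → ℝ≥0∞} {R : ι → (α → β) → Set O} {t : ι → BudgetedDT (ι × α) β O}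

lemma memorylessPayoff_le_of_forall_root_eq_none (h : ∀ k, (t k).2.root = none) :
    memorylessPayoff w R t ≤ ∏ k, optPayoff (w k) (R k) (t k).1 := by
  choose o ho using fun k => DT.exists_eq_ret_of_root_eq_none (h k)
  have hfactor :
      memorylessPayoff w R t = ∏ k, payoff (w k) (R k) (DT.ret (T := (t k).1) (o k)) := by
    simp only [memorylessPayoff, payoff, ho, DT.run, ind_forall, ← prod_mul_distrib]
    exact (Fintype.prod_sum fun k x => w k x * ind (o k ∈ R k x)).symm
  rw [hfactor]
  exact prod_le_prod' fun k _ => payoff_le_optPayoff _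

lemma memorylessPayoff_update_sum {γ : Type} [Fintype γ] (k₀ : ι) (v : γ → (α → β) → ℝ≥0∞) :
    memorylessPayoff (update w k₀ (∑ x, v x)) R t =
      ∑ x, memorylessPayoff (update w k₀ (v x)) R t := by
  unfold memorylessPayoff
  rw [sum_comm]
  refine sum_congr rfl fun H _ => ?_
  simp only [prod_apply_update (fun k (g : (α → β) → ℝ≥0∞) => g (H k)), Finset.sum_apply,
    sum_mul]

lemma memorylessPayoff_eq_update_of_eq_ret {k₀ : ι} {o : O} (ho : (t k₀).2 = .ret o) :
    memorylessPayoff w R t =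
      memorylessPayoff (update w k₀ fun x => w k₀ x * ind (o ∈ R k₀ x)) R t := by
  refine sum_congr rfl fun H _ => ?_
  by_cases hwin : ∀ k, (t k).2.run (uncurry H) ∈ R k (H k)
  · have hmem : o ∈ R k₀ (H k₀) := by simpa [ho, DT.run] using hwin k₀
    rw [prod_apply_update (fun k (g : (α → β) → ℝ≥0∞) => g (H k)), ind_of_pos hmem, mul_one,
      mul_prod_erase univ (fun k => w k (H k)) (mem_univ k₀)]
  · rw [ind_of_neg hwin, mul_zero, mul_zero]

variable [DecidableEq β]

lemma memorylessPayoff_le_of_eq_ret {k₀ : ι} {o : O} (ho : (t k₀).2 = .ret o)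
    (ih : ∀ x, memorylessPayoff (update w k₀ (Pi.single x (w k₀ x * ind (o ∈ R k₀ x)))) R t ≤
      ∏ k, optPayoff (update w k₀ (Pi.single x (w k₀ x * ind (o ∈ R k₀ x))) k) (R k) (t k).1) :
    memorylessPayoff w R t ≤ ∏ k, optPayoff (w k) (R k) (t k).1 := by
  set c : (α → β) → ℝ≥0∞ := fun x => w k₀ x * ind (o ∈ R k₀ x)
  set rest := ∏ k ∈ univ.erase k₀, optPayoff (w k) (R k) (t k).1
  have hsingle (x : α → β) : optPayoff (Pi.single x (c x)) (R k₀) (t k₀).1 ≤ c x :=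
    (optPayoff_le_sum _ _ _).trans_eq (by rw [sum_pi_single', if_pos (mem_univ x)])
  calc memorylessPayoff w R t
      = ∑ x, memorylessPayoff (update w k₀ (Pi.single x (c x))) R t := by
        rw [memorylessPayoff_eq_update_of_eq_ret ho, ← memorylessPayoff_update_sum,
          univ_sum_single]
    _ ≤ ∑ x, optPayoff (Pi.single x (c x)) (R k₀) (t k₀).1 * rest := by
        refine sum_le_sum fun x _ => (ih x).trans_eq ?_
        exact prod_apply_update (fun k g => optPayoff g (R k) (t k).1) w k₀ _
    _ ≤ payoff (w k₀) (R k₀) (DT.ret (T := (t k₀).1) o) * rest := by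
        rw [← sum_mul]
        exact mul_le_mul_left (sum_le_sum fun x _ => hsingle x) _
    _ ≤ ∏ k, optPayoff (w k) (R k) (t k).1 := by
        rw [← mul_prod_erase univ _ (mem_univ k₀)]
        exact mul_le_mul_left (payoff_le_optPayoff _) _

end Memoryless

section Peel

variable {ι α β O : Type}

def fiberWeights (π : ι → (α → β) → β) (a : ι → β) (w : ι → (α → β) → ℝ≥0∞) :
    ι → (α → β) → ℝ≥0∞ :=
  fun k => (π k ⁻¹' {a k}).indicator (w k)

def FirstQueriesObserved (π : ι → (α → β) → β) (C : Finset ι)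
    (t : ι → BudgetedDT (ι × α) β O) : Prop :=
  ∀ c ∈ C, ∃ q, (t c).2.root = some q ∧ π q.1 = fun x => x q.2

variable [DecidableEq ι] {t : ι → BudgetedDT (ι × α) β O} {π : ι → (α → β) → β} {C : Finset ι}

def advance (C : Finset ι) (a : ι → β) (t : ι → BudgetedDT (ι × α) β O) :
    ι → BudgetedDT (ι × α) β O :=
  fun k => if k ∈ C then (t k).stepBy (fun q => a q.1) else t k

lemma advance_fst (hC : FirstQueriesObserved π C t) (a : ι → β) (k : ι) :
    (advance C a t k).1 = if k ∈ C then (t k).1 - 1 else (t k).1 := by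
  unfold advance
  split_ifs with hk
  · obtain ⟨q, hq, -⟩ := hC k hk
    rw [← BudgetedDT.stepBy_fst_add_one (ans := fun q => a q.1) hq, Nat.add_sub_cancel]
  · rfl

lemma sum_advance_fst_lt [Fintype ι] (hC : FirstQueriesObserved π C t) (hCne : C.Nonempty)
    (a : ι → β) : ∑ k, (advance C a t k).1 < ∑ k, (t k).1 := by
  have hlt (k : ι) (hk : k ∈ C) : (advance C a t k).1 < (t k).1 := by
    obtain ⟨q, hq, -⟩ := hC k hk
    rw [advance, if_pos hk, ← BudgetedDT.stepBy_fst_add_one (ans := fun q => a q.1) hq]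
    exact Nat.lt_succ_self _
  obtain ⟨c, hc⟩ := hCne
  refine sum_lt_sum (fun k _ => ?_) ⟨c, mem_univ c, hlt c hc⟩
  by_cases hk : k ∈ C
  · exact (hlt k hk).le
  · rw [advance, if_neg hk]

variable [Fintype ι] [Fintype α] [DecidableEq α] [Fintype β]
  {w : ι → (α → β) → ℝ≥0∞} {R : ι → (α → β) → Set O}

lemma memorylessPayoff_eq_sum_fiberWeights (hC : FirstQueriesObserved π C t) :
    memorylessPayoff w R t =
      ∑ a, memorylessPayoff (fiberWeights π a w) R (advance C a t) := by
  unfold memorylessPayoff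
  rw [sum_comm]
  refine sum_congr rfl fun H _ => ?_
  have hobs (k : ι) : H k ∈ π k ⁻¹' {π k (H k)} := rfl
  rw [sum_eq_single (fun k => π k (H k))]
  · congr 1
    · exact prod_congr rfl fun k _ => (Set.indicator_of_mem (hobs k) _).symm
    · refine congrArg ind (propext (forall_congr' fun k => ?_))
      by_cases hk : k ∈ C
      · obtain ⟨q, hq, hπ⟩ := hC k hk
        rw [advance, if_pos hk,
          BudgetedDT.run_stepBy (ans := fun q => π q.1 (H q.1)) (f := uncurry H) hq
            (congrFun hπ (H q.1))]
      · rw [advance, if_neg hk]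
  · intro a _ ha
    obtain ⟨k, hk⟩ := ne_iff.mp ha
    refine mul_eq_zero_of_left (prod_eq_zero (mem_univ k) ?_) _
    exact Set.indicator_of_notMem (show H k ∉ π k ⁻¹' {a k} from fun h => hk h.symm) _
  · exact absurd (mem_univ _)

lemma memorylessPayoff_le_of_advance (hC : FirstQueriesObserved π C t)
    (hbudget : ∀ k, ∑ b, optPayoff ((π k ⁻¹' {b}).indicator (w k)) (R k)
      (if k ∈ C then (t k).1 - 1 else (t k).1) ≤ optPayoff (w k) (R k) (t k).1)
    (ih : ∀ a, memorylessPayoff (fiberWeights π a w) R (advance C a t) ≤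
      ∏ k, optPayoff (fiberWeights π a w k) (R k) (advance C a t k).1) :
    memorylessPayoff w R t ≤ ∏ k, optPayoff (w k) (R k) (t k).1 :=
  calc memorylessPayoff w R t
      = ∑ a, memorylessPayoff (fiberWeights π a w) R (advance C a t) :=
        memorylessPayoff_eq_sum_fiberWeights hC
    _ ≤ ∑ a : ι → β, ∏ k, optPayoff ((π k ⁻¹' {a k}).indicator (w k)) (R k)
          (if k ∈ C then (t k).1 - 1 else (t k).1) := by
        refine sum_le_sum fun a _ => (ih a).trans_eq ?_
        simp only [advance_fst hC, fiberWeights]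
    _ = ∏ k, ∑ b, optPayoff ((π k ⁻¹' {b}).indicator (w k)) (R k)
          (if k ∈ C then (t k).1 - 1 else (t k).1) :=
        (Fintype.prod_sum fun k b => optPayoff ((π k ⁻¹' {b}).indicator (w k)) (R k) _).symm
    _ ≤ ∏ k, optPayoff (w k) (R k) (t k).1 := prod_le_prod' fun k _ => hbudget k

end Peel

section Induction

variable {ι α β O : Type}
  {w : ι → (α → β) → ℝ≥0∞} {R : ι → (α → β) → Set O} {t : ι → BudgetedDT (ι × α) β O}

/-- Either a single tree querying a point-mass oracle, or a cycle of trees each querying the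
oracle of the next. -/
lemma exists_answerable_firstQueries [Fintype ι]
    (hleaf : ∀ k, (t k).2.root = none → (support (w k)).Subsingleton)
    (hnode : ∃ k, (t k).2.root ≠ none) :
    ∃ (C : Finset ι) (q : ι → ι × α), C.Nonempty ∧ (∀ c ∈ C, (t c).2.root = some (q c)) ∧
      Set.InjOn (fun c => (q c).1) C ∧
      ∀ c ∈ C, (q c).1 ∈ C ∨ (support (w (q c).1)).Subsingleton := by
  obtain ⟨k₁, hk₁⟩ := hnode
  obtain ⟨q₁, -⟩ := Option.ne_none_iff_exists'.mp hk₁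
  set q : ι → ι × α := fun k => ((t k).2.root).getD q₁
  set A := univ.filter fun k => (t k).2.root ≠ none
  have hq (k : ι) (hk : k ∈ A) : (t k).2.root = some (q k) := by
    obtain ⟨r, hr⟩ := Option.ne_none_iff_exists'.mp (mem_filter.mp hk).2
    simp [q, hr]
  have hA : A.Nonempty := ⟨k₁, by simpa [A] using hk₁⟩
  rcases exists_exit_or_cycle (fun k => (q k).1) hA with
    ⟨k, hk, hexit⟩ | ⟨C, hCA, hCne, hmaps, hinj⟩
  · refine ⟨{k}, q, singleton_nonempty k, by simpa using hq k hk, by simp, ?_⟩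
    simp only [mem_singleton, forall_eq]
    exact .inr (hleaf _ (by simpa [A] using hexit))
  · exact ⟨C, q, hCne, fun c hc => hq c (hCA hc), hinj, fun c hc => .inl (hmaps c hc)⟩

lemma exists_firstQueriesObserved [DecidableEq ι] [Fintype α] [DecidableEq α] [Fintype β]
    [Nonempty β] {C : Finset ι} {q : ι → ι × α}
    (hq : ∀ c ∈ C, (t c).2.root = some (q c)) (hinj : Set.InjOn (fun c => (q c).1) C)
    (hprobe : ∀ c ∈ C, (q c).1 ∈ C ∨ (support (w (q c).1)).Subsingleton) :
    ∃ π : ι → (α → β) → β, FirstQueriesObserved π C t ∧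
      ∀ j, ∑ b, optPayoff ((π j ⁻¹' {b}).indicator (w j)) (R j)
        (if j ∈ C then (t j).1 - 1 else (t j).1) ≤ optPayoff (w j) (R j) (t j).1 := by
  classical
  set π : ι → (α → β) → β := fun j x =>
    if h : ∃ c ∈ C, (q c).1 = j then x (q h.choose).2 else Classical.arbitrary β
  have hπ {j : ι} (h : ∃ c ∈ C, (q c).1 = j) : π j = fun x => x (q h.choose).2 :=
    funext fun x => dif_pos h
  have hconst {j : ι} (h : ¬∃ c ∈ C, (q c).1 = j) (T : ℕ) :
      ∑ b, optPayoff ((π j ⁻¹' {b}).indicator (w j)) (R j) T = optPayoff (w j) (R j) T :=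
    sum_optPayoff_indicator_of_eqOn_support (fun x _ => dif_neg h) T
  refine ⟨π, fun c hc => ⟨q c, hq c hc, ?_⟩, fun j => ?_⟩
  · have h : ∃ c' ∈ C, (q c').1 = (q c).1 := ⟨c, hc, rfl⟩
    rw [hπ h, hinj h.choose_spec.1 hc h.choose_spec.2]
  by_cases hjC : j ∈ C
  · rw [if_pos hjC]
    have hpos : 0 < (t j).1 := DT.pos_of_root_eq_some (hq j hjC)
    by_cases h : ∃ c ∈ C, (q c).1 = j
    · rw [hπ h]
      refine (sum_optPayoff_indicator_eval_le _ _ _ _).trans_eq ?_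
      rw [Nat.sub_add_cancel hpos]
    · rw [hconst h]
      exact optPayoff_mono _ _ (Nat.sub_le _ 1)
  · rw [if_neg hjC]
    by_cases h : ∃ c ∈ C, (q c).1 = j
    · obtain ⟨hcC, hcj⟩ := h.choose_spec
      have hpt : (support (w j)).Subsingleton := by
        rw [← hcj]
        exact (hprobe _ hcC).resolve_left (by rwa [hcj])
      obtain ⟨c, hc⟩ := hpt.exists_forall_eq (π j)
      exact (sum_optPayoff_indicator_of_eqOn_support hc _).le
    · exact (hconst h _).le

theorem memorylessPayoff_le_prod_optPayoff [Fintype ι] [DecidableEq ι] [Fintype α]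
    [DecidableEq α] [Fintype β] [DecidableEq β] [Nonempty β]
    (w : ι → (α → β) → ℝ≥0∞) (R : ι → (α → β) → Set O) (t : ι → BudgetedDT (ι × α) β O) :
    memorylessPayoff w R t ≤ ∏ k, optPayoff (w k) (R k) (t k).1 := by
  induction hn : nondegCount w + ∑ k, (t k).1 using Nat.strong_induction_on generalizing w t
    with | _ n ih => ?_
  subst hn
  by_cases hleaves : ∀ k, (t k).2.root = none
  · exact memorylessPayoff_le_of_forall_root_eq_none hleaves
  by_cases hsplit : ∃ k, (t k).2.root = none ∧ ¬(support (w k)).Subsingleton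
  · obtain ⟨k, hk, hw⟩ := hsplit
    obtain ⟨o, ho⟩ := DT.exists_eq_ret_of_root_eq_none hk
    refine memorylessPayoff_le_of_eq_ret ho fun x => ih _ ?_ _ _ rfl
    have := nondegCount_update_lt hw (v := Pi.single x (w k x * ind (o ∈ R k x)))
      (Set.subsingleton_singleton.anti Pi.support_single_subset)
    omega
  push Not at hleaves hsplit
  obtain ⟨C, q, hCne, hq, hinj, hprobe⟩ := exists_answerable_firstQueries hsplit hleaves
  obtain ⟨π, hC, hbudget⟩ := exists_firstQueriesObserved (R := R) hq hinj hprobe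
  refine memorylessPayoff_le_of_advance hC hbudget fun a => ih _ ?_ _ _ rfl
  have := sum_advance_fst_lt hC hCne a
  have := nondegCount_le_of_support_subset (w := w) (w' := fiberWeights π a w) fun k => by
    rw [fiberWeights, Set.support_indicator]
    exact Set.inter_subset_right
  omega

end Induction

lemma optPayoff_condDist_le_condSec (G : Game) (ch : G.Ch) (T : ℕ) :
    optPayoff (G.condDist ch) (fun f => G.R f ch) T ≤ G.condSec ch T :=
  iSup_le fun s => le_iSup_of_le (PMF.pure s) (by simp [payoff, tsum_fintype])

end

theorem cond_memoryless_sdpt_general (G : Game) (K : ℕ) (T u : ℕ)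
    (ks : Fin u → Fin K)
    (chs : Fin u → G.Ch)
    (f0 : Fin K → Fin G.M → Fin G.N)
    (B : Fin K × G.Ch → DT (Fin K × Fin G.M) (fun _ => Fin G.N) G.Out T) :
    (∑' h : Fin u → Fin G.M → Fin G.N,
        (∏ i, G.condDist (chs i) (h i)) *
          ind (∀ i, (B (ks i, chs i)).run
              (fun q => (if hj : ∃ i', ks i' = q.1 then h hj.choose else f0 q.1) q.2)
            ∈ G.R (h i) (chs i)))
      ≤ ∏ i, G.condSec (chs i) T := by
  have : Nonempty (Fin G.N) := ⟨⟨0, G.hN⟩⟩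
  let ρ (q : Fin K × Fin G.M) : (Fin u × Fin G.M) ⊕ Fin G.N :=
    if hj : ∃ i', ks i' = q.1 then .inl (hj.choose, q.2) else .inr (f0 q.1 q.2)
  let t (i : Fin u) : BudgetedDT (Fin u × Fin G.M) (Fin G.N) G.Out :=
    ⟨T, (B (ks i, chs i)).reroute ρ⟩
  have hrun (h : Fin u → Fin G.M → Fin G.N) (i : Fin u) : (t i).2.run (Function.uncurry h) =
      (B (ks i, chs i)).run
        (fun q => (if hj : ∃ i', ks i' = q.1 then h hj.choose else f0 q.1) q.2) := by
    rw [DT.run_reroute]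
    congr 1
    funext q
    by_cases hj : ∃ i', ks i' = q.1 <;> simp [ρ, hj]
  calc _ = memorylessPayoff (fun i => G.condDist (chs i)) (fun i f => G.R f (chs i)) t := by
        simp only [tsum_fintype, memorylessPayoff, hrun]
    _ ≤ ∏ i, optPayoff (G.condDist (chs i)) (fun f => G.R f (chs i)) T :=
        memorylessPayoff_le_prod_optPayoff _ _ t
    _ ≤ _ := Finset.prod_le_prod' fun i _ => optPayoff_condDist_le_condSec G (chs i) T

/-- Fix `u` distinct salts `ks 0, …, ks (u-1)` with possible
challenges `chs i`, fixed oracles `f0 j` for all remaining salts, and sample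
`f (ks i) ∼ μ_{chs i}` independently. Running a deterministic `T`-query algorithm
`B` (with joint oracle access) sequentially on the inputs `(ks i, chs i)`, the
probability that every output is accepted is at most `∏ i, ε_{G_{chs i}}(T)`. -/
theorem cond_memoryless_sdpt (G : Game) (K : ℕ) (hK : 0 < K) (T u : ℕ)
    (ks : Fin u → Fin K) (hks : Function.Injective ks)
    (chs : Fin u → G.Ch) (hchs : ∀ i, G.chProb (chs i) ≠ 0)
    (f0 : Fin K → Fin G.M → Fin G.N)
    (B : Fin K × G.Ch → DT (Fin K × Fin G.M) (fun _ => Fin G.N) G.Out T) :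
    (∑' h : Fin u → Fin G.M → Fin G.N,
        (∏ i, G.condDist (chs i) (h i)) *
          ind (∀ i, (B (ks i, chs i)).run
              (fun q => (if hj : ∃ i', ks i' = q.1 then h hj.choose else f0 q.1) q.2)
            ∈ G.R (h i) (chs i)))
      ≤ ∏ i, G.condSec (chs i) T :=
  cond_memoryless_sdpt_general G K T u ks chs f0 B
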